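/- arXiv:2601.08804 — 4 statements merged into one kernel-verified Lean document; each statement's English description precedes it below -/
import Mathlib

section
/- Let H : [0,∞) → ℝ be continuous with H(s) ≥ 0 for all s ≥ 0, let C ≥ 0, and let w : [0,∞) → ℝ be continuously differentiable with w(0) > 0 and satisfying, for every R ≥ 0, w'(R) ≥ H(R)·w(R) + C·∫₀^R w(r) dr. Then w is nondecreasing on [0,∞) and w(R) ≥ w(0) > 0 for every R ≥ 0. -/
open MeasureTheory Real Filter Set Topology

lemma idc_mono_aux (w w' : ℝ → ℝ)
    (hw : ∀ R ∈ Ici (0:ℝ), HasDerivWithinAt w (w' R) (Ici 0) R)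
    {D : Set ℝ} (hD : Convex ℝ D) (hDsub : D ⊆ Ici 0) (hDint : interior D ⊆ Ioi 0)
    (h' : ∀ x ∈ interior D, 0 ≤ w' x) : MonotoneOn w D := by
  have hda : ∀ x ∈ interior D, HasDerivAt w (w' x) x := by
    intro x hx
    exact (hw x (hDsub (interior_subset hx))).hasDerivAt (Ici_mem_nhds (hDint hx))
  refine monotoneOn_of_deriv_nonneg hD
    (fun x hx => (hw x (hDsub hx)).continuousWithinAt.mono hDsub)
    (fun x hx => (hda x hx).differentiableAt.differentiableWithinAt) ?_
  intro x hx
  rw [(hda x hx).deriv]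
  exact h' x hx

/-- Integro-differential comparison principle: if `w` is C¹ on `[0,∞)` with `w(0) > 0` and
satisfies `w'(R) ≥ H(R)·w(R) + C·∫₀^R w(r) dr` for all `R ≥ 0`, where `H` is continuous and
nonnegative on `[0,∞)` and `C ≥ 0`, then `w` is nondecreasing on `[0,∞)` and
`w(R) ≥ w(0) > 0` for all `R ≥ 0`. -/
theorem integro_differential_comparison (H : ℝ → ℝ) (hHcont : ContinuousOn H (Ici 0))
    (hHnonneg : ∀ s : ℝ, 0 ≤ s → 0 ≤ H s) (C : ℝ) (hC : 0 ≤ C) (w w' : ℝ → ℝ)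
    (hw : ∀ R ∈ Ici (0:ℝ), HasDerivWithinAt w (w' R) (Ici 0) R)
    (hw' : ContinuousOn w' (Ici 0)) (hw0 : 0 < w 0)
    (hineq : ∀ R : ℝ, 0 ≤ R → H R * w R + C * ∫ r in (0:ℝ)..R, w r ≤ w' R) :
    MonotoneOn w (Ici 0) ∧ ∀ R : ℝ, 0 ≤ R → w 0 ≤ w R := by
  have hwc : ContinuousOn w (Ici 0) := fun R hR => (hw R hR).continuousWithinAt
  -- key nonnegativity of w' given w ≥ 0 on [0,R]
  have hd : ∀ R : ℝ, 0 ≤ R → (∀ r ∈ Icc (0:ℝ) R, 0 ≤ w r) → 0 ≤ w' R := by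
    intro R hR hwnn
    refine le_trans ?_ (hineq R hR)
    have h1 : 0 ≤ H R * w R := mul_nonneg (hHnonneg R hR) (hwnn R ⟨hR, le_refl R⟩)
    have h2 : 0 ≤ ∫ r in (0:ℝ)..R, w r := intervalIntegral.integral_nonneg hR hwnn
    positivity
  -- positivity of w on [0,∞)
  have hpos : ∀ R : ℝ, 0 ≤ R → 0 < w R := by
    by_contra h
    push_neg at h
    obtain ⟨t₀, ht₀, hwt₀⟩ := h
    set A : Set ℝ := {R | 0 ≤ R ∧ w R ≤ 0} with hA
    have hAne : A.Nonempty := ⟨t₀, ht₀, hwt₀⟩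
    have hAbdd : BddBelow A := ⟨0, fun x hx => hx.1⟩
    have hAclosed : IsClosed A := by
      have hEq : A = Ici 0 ∩ w ⁻¹' Iic 0 := by
        ext x; simp [hA, Set.mem_inter_iff]
      rw [hEq]
      exact hwc.preimage_isClosed_of_isClosed isClosed_Ici isClosed_Iic
    set t := sInf A with ht
    have htA : t ∈ A := hAclosed.csInf_mem hAne hAbdd
    have ht0 : 0 ≤ t := htA.1
    have htpos : 0 < t := by
      rcases ht0.lt_or_eq with h | h
      · exact h
      · exact absurd htA.2 (by rw [← h]; exact not_le.2 hw0)
    have hwlt : ∀ r : ℝ, 0 ≤ r → r < t → 0 < w r := by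
      intro r hr hrt
      by_contra hle
      push_neg at hle
      exact absurd (csInf_le hAbdd ⟨hr, hle⟩) (not_le.2 hrt)
    -- w is monotone on [0, s] for every s < t
    have hmono : ∀ s : ℝ, 0 ≤ s → s < t → w 0 ≤ w s := by
      intro s hs hst
      have : MonotoneOn w (Icc 0 s) := by
        refine idc_mono_aux w w' hw (convex_Icc 0 s) (fun x hx => hx.1) ?_ ?_
        · rw [interior_Icc]; exact fun x hx => hx.1
        · rw [interior_Icc]
          intro x hx
          refine hd x hx.1.le ?_
          intro r hr
          exact (hwlt r hr.1 (lt_of_le_of_lt (hr.2.trans hx.2.le) hst)).le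
      exact this ⟨le_refl 0, hs⟩ ⟨hs, le_refl s⟩ hs
    -- take the limit s → t⁻
    have hclos : t ∈ closure (Ico (0:ℝ) t) := by
      rw [closure_Ico htpos.ne]
      exact ⟨ht0, le_refl t⟩
    haveI hnb : (𝓝[Ico (0:ℝ) t] t).NeBot := mem_closure_iff_nhdsWithin_neBot.1 hclos
    have htend : Tendsto w (𝓝[Ico (0:ℝ) t] t) (𝓝 (w t)) :=
      ((hwc t (mem_Ici.2 ht0)).mono (fun x hx => hx.1)).tendsto
    have hge : w 0 ≤ w t := by
      refine ge_of_tendsto htend ?_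
      filter_upwards [self_mem_nhdsWithin] with r hr
      exact hmono r hr.1 hr.2
    exact absurd htA.2 (not_le.2 (lt_of_lt_of_le hw0 hge))
  -- conclusion
  have hmono : MonotoneOn w (Ici 0) := by
    refine idc_mono_aux w w' hw (convex_Ici 0) (le_refl _) ?_ ?_
    · rw [interior_Ici]
    · rw [interior_Ici]
      intro x hx
      exact hd x hx.le fun r hr => (hpos r hr.1).le
  exact ⟨hmono, fun R hR => hmono (self_mem_Ici) hR hR⟩
end

section
/- Let n ≥ 2 be an integer and let a > 0, b > 0, σ > 0 be such that sinh^{n−1}(a·s) − σ·s > 0 for all s ≥ 1. Then there exists a real number L with 0 < L < ∞ such that lim_{R→∞} exp( (n−1)·b · ∫₁^R coth(b·s) / (1 − σ·s·sinh^{1−n}(a·s)) ds ) / sinh^{n−1}(b·R) = L. In particular, the function R ↦ exp((n−1)·b·∫₁^R coth(b·s)/(1 − σ·s·sinh^{1−n}(a·s)) ds) grows like sinh^{n−1}(b·R), the volume growth rate of geodesic spheres in hyperbolic space of curvature −b². -/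
open MeasureTheory Real Filter

noncomputable section

/-- The hyperbolic cotangent. -/
def coth (x : ℝ) : ℝ := Real.cosh x / Real.sinh x

lemma coth_pos {x : ℝ} (hx : 0 < x) : 0 < coth x :=
  div_pos (Real.cosh_pos x) (Real.sinh_pos_iff.2 hx)

lemma coth_le_coth {b x : ℝ} (hb : 0 < b) (hx : b ≤ x) : coth x ≤ coth b := by
  have hsx : 0 < Real.sinh x := Real.sinh_pos_iff.2 (lt_of_lt_of_le hb hx)
  have hsb : 0 < Real.sinh b := Real.sinh_pos_iff.2 hb
  rw [coth, coth, div_le_div_iff₀ hsx hsb]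
  have h := Real.sinh_nonneg_iff.2 (sub_nonneg.2 hx)
  rw [Real.sinh_sub] at h
  linarith

lemma aux_div (x t : ℝ) (h : 1 - t ≠ 0) : x / (1 - t) = x + x * (t / (1 - t)) := by
  field_simp
  ring

/-- The function `R ↦ exp((n-1)·b·∫₁^R coth(bs)/(1 - σ·s·sinh^(1-n)(as)) ds)` grows like
`sinh^(n-1)(bR)`, the volume growth rate of geodesic spheres in hyperbolic space of
curvature `-b²`: the ratio tends to a finite positive limit `L`. -/
theorem price_exponential_growth (n : ℕ) (hn : 2 ≤ n) (a b σ : ℝ) (ha : 0 < a) (hb : 0 < b)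
    (hσ : 0 < σ)
    (hpos : ∀ s : ℝ, 1 ≤ s → 0 < Real.sinh (a * s) ^ (n - 1) - σ * s) :
    ∃ L : ℝ, 0 < L ∧
      Tendsto (fun R : ℝ =>
          Real.exp (((n : ℝ) - 1) * b *
              ∫ s in (1:ℝ)..R, coth (b * s) / (1 - σ * s / Real.sinh (a * s) ^ (n - 1))) /
            Real.sinh (b * R) ^ (n - 1))
        atTop (nhds L) := by
  set k := n - 1 with hkdef
  have hk1 : 1 ≤ k := by omega
  have hkR : ((n : ℝ) - 1) = (k : ℝ) := by
    have h1 : (1:ℕ) ≤ n := by omega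
    rw [hkdef, Nat.cast_sub h1, Nat.cast_one]
  set g : ℝ → ℝ := fun s => σ * s / Real.sinh (a * s) ^ k with hgdef
  set φ : ℝ → ℝ := fun s => coth (b * s) * (g s / (1 - g s)) with hφdef
  -- basic positivity facts
  have hsinh : ∀ s : ℝ, 1 ≤ s → 0 < Real.sinh (a * s) := fun s hs =>
    Real.sinh_pos_iff.2 (mul_pos ha (lt_of_lt_of_le one_pos hs))
  have hpow : ∀ s : ℝ, 1 ≤ s → 0 < Real.sinh (a * s) ^ k := fun s hs =>
    pow_pos (hsinh s hs) k
  have hg_pos : ∀ s : ℝ, 1 ≤ s → 0 < g s := fun s hs =>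
    div_pos (mul_pos hσ (lt_of_lt_of_le one_pos hs)) (hpow s hs)
  have hg_lt : ∀ s : ℝ, 1 ≤ s → g s < 1 := by
    intro s hs
    rw [hgdef]
    rw [div_lt_one (hpow s hs)]
    have := hpos s hs
    linarith
  -- exponential lower bound for sinh
  set c₀ : ℝ := (1 - Real.exp (-(2 * a))) / 2 with hc₀def
  have hc₀ : 0 < c₀ := by
    have : Real.exp (-(2 * a)) < 1 := Real.exp_lt_one_iff.2 (by linarith)
    rw [hc₀def]; linarith
  have hsinh_ge : ∀ s : ℝ, 1 ≤ s → c₀ * Real.exp (a * s) ≤ Real.sinh (a * s) := by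
    intro s hs
    have has : a ≤ a * s := le_mul_of_one_le_right ha.le hs
    have h1 : Real.exp (-(a * s)) ≤ Real.exp (a * s - 2 * a) :=
      Real.exp_le_exp.2 (by linarith)
    have h2 : Real.exp (a * s - 2 * a) = Real.exp (a * s) * Real.exp (-(2 * a)) := by
      rw [← Real.exp_add]; ring_nf
    rw [Real.sinh_eq, hc₀def]
    rw [h2] at h1
    nlinarith [Real.exp_pos (a * s)]
  have hpow_ge : ∀ s : ℝ, 1 ≤ s → c₀ ^ k * Real.exp (a * s) ≤ Real.sinh (a * s) ^ k := by
    intro s hs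
    have h1 : (c₀ * Real.exp (a * s)) ^ k ≤ Real.sinh (a * s) ^ k :=
      pow_le_pow_left₀ (by positivity) (hsinh_ge s hs) k
    have h2 : (c₀ * Real.exp (a * s)) ^ k = c₀ ^ k * Real.exp ((k : ℝ) * (a * s)) := by
      rw [mul_pow, Real.exp_nat_mul]
    have h3 : Real.exp (a * s) ≤ Real.exp ((k : ℝ) * (a * s)) := by
      apply Real.exp_le_exp.2
      have hk1' : (1 : ℝ) ≤ (k : ℝ) := by exact_mod_cast hk1
      nlinarith [mul_pos ha (lt_of_lt_of_le one_pos hs)]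
    calc c₀ ^ k * Real.exp (a * s) ≤ c₀ ^ k * Real.exp ((k : ℝ) * (a * s)) := by
          apply mul_le_mul_of_nonneg_left h3 (by positivity)
      _ = (c₀ * Real.exp (a * s)) ^ k := h2.symm
      _ ≤ _ := h1
  -- exponential upper bound for g
  set C : ℝ := σ * (2 / a) / c₀ ^ k with hCdef
  have hC : 0 < C := by positivity
  have hg_le : ∀ s : ℝ, 1 ≤ s → g s ≤ C * Real.exp (-(a / 2) * s) := by
    intro s hs
    rw [hgdef]
    rw [div_le_iff₀ (hpow s hs)]
    have h2 : a * s / 2 ≤ Real.exp (a * s / 2) := by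
      have := Real.add_one_le_exp (a * s / 2); linarith
    have h3 : Real.exp (-(a / 2) * s) * Real.exp (a * s) = Real.exp (a * s / 2) := by
      rw [← Real.exp_add]; ring_nf
    calc σ * s = σ * (2 / a) * (a * s / 2) := by field_simp
      _ ≤ σ * (2 / a) * Real.exp (a * s / 2) := by
          apply mul_le_mul_of_nonneg_left h2 (by positivity)
      _ = C * Real.exp (-(a / 2) * s) * (c₀ ^ k * Real.exp (a * s)) := by
          have hck : (0:ℝ) < c₀ ^ k := by positivity
          have h4 : C * Real.exp (-(a/2)*s) * (c₀^k * Real.exp (a*s))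
              = σ * (2/a) * (Real.exp (-(a/2)*s) * Real.exp (a*s)) * (c₀^k / c₀^k) := by
            rw [hCdef]; ring
          rw [h4, div_self hck.ne', mul_one, h3]
      _ ≤ C * Real.exp (-(a / 2) * s) * Real.sinh (a * s) ^ k := by
          apply mul_le_mul_of_nonneg_left (hpow_ge s hs) (by positivity)
  -- g tends to 0
  have hexp_tend : Tendsto (fun s : ℝ => C * Real.exp (-(a / 2) * s)) atTop (nhds 0) := by
    have h1 : Tendsto (fun s : ℝ => (a / 2) * s) atTop atTop :=
      tendsto_id.const_mul_atTop (half_pos ha)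
    have h2 : Tendsto (fun s : ℝ => Real.exp (-((a / 2) * s))) atTop (nhds 0) :=
      Real.tendsto_exp_neg_atTop_nhds_zero.comp h1
    have h3 := h2.const_mul C
    rw [mul_zero] at h3
    refine h3.congr fun s => by ring_nf
  have hg_tend : Tendsto g atTop (nhds 0) := by
    apply tendsto_of_tendsto_of_tendsto_of_le_of_le' tendsto_const_nhds hexp_tend
    · filter_upwards [eventually_ge_atTop (1:ℝ)] with s hs using (hg_pos s hs).le
    · filter_upwards [eventually_ge_atTop (1:ℝ)] with s hs using hg_le s hs
  -- continuity of g on Ici 1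
  have hg_cont : ContinuousOn g (Set.Ici 1) := by
    apply ContinuousOn.div
    · exact (continuous_const.mul continuous_id).continuousOn
    · exact ((Real.continuous_sinh.comp (continuous_const.mul continuous_id)).pow k).continuousOn
    · exact fun s hs => (hpow s hs).ne'
  -- uniform lower bound on 1 - g
  obtain ⟨ε, hε, hεle⟩ : ∃ ε : ℝ, 0 < ε ∧ ∀ s : ℝ, 1 ≤ s → ε ≤ 1 - g s := by
    have hev : ∀ᶠ s in atTop, g s ≤ 1 / 2 :=
      hg_tend.eventually (eventually_le_nhds (by norm_num))
    obtain ⟨s₀, hs₀⟩ := eventually_atTop.1 hev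
    set s₁ := max s₀ 1 with hs₁def
    have h1s₁ : (1:ℝ) ≤ s₁ := le_max_right _ _
    obtain ⟨x, hxmem, hxmax⟩ := isCompact_Icc.exists_isMaxOn (α := ℝ)
      ⟨1, Set.mem_Icc.2 ⟨le_refl 1, h1s₁⟩⟩
      (hg_cont.mono (fun y hy => (Set.mem_Icc.1 hy).1))
    have hgx : g x < 1 := hg_lt x (Set.mem_Icc.1 hxmem).1
    refine ⟨min (1/2) (1 - g x), lt_min (by norm_num) (by linarith), fun s hs => ?_⟩
    rcases le_total s s₁ with h | h
    · have hgs : g s ≤ g x := hxmax (Set.mem_Icc.2 ⟨hs, h⟩)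
      have : min (1/2) (1 - g x) ≤ 1 - g x := min_le_right _ _
      linarith
    · have hgs : g s ≤ 1 / 2 := hs₀ s (le_trans (le_max_left _ _) h)
      have : min (1/2 : ℝ) (1 - g x) ≤ 1/2 := min_le_left _ _
      linarith
  have h1g_ne : ∀ s : ℝ, 1 ≤ s → (1 - g s) ≠ 0 := fun s hs => by
    have := hεle s hs; linarith
  -- continuity of φ and the integrand f on Ici 1
  have hcoth_cont : ContinuousOn (fun s : ℝ => coth (b * s)) (Set.Ici 1) := by
    apply ContinuousOn.div
    · exact (Real.continuous_cosh.comp (continuous_const.mul continuous_id)).continuousOn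
    · exact (Real.continuous_sinh.comp (continuous_const.mul continuous_id)).continuousOn
    · intro s hs
      exact (Real.sinh_pos_iff.2 (mul_pos hb (lt_of_lt_of_le one_pos hs))).ne'
  have hφ_cont : ContinuousOn φ (Set.Ici 1) := by
    apply hcoth_cont.mul
    apply ContinuousOn.div hg_cont
    · exact continuousOn_const.sub hg_cont
    · exact fun s hs => h1g_ne s hs
  have hf_cont : ContinuousOn
      (fun s : ℝ => coth (b * s) / (1 - σ * s / Real.sinh (a * s) ^ k)) (Set.Ici 1) := by
    apply ContinuousOn.div hcoth_cont
    · exact continuousOn_const.sub hg_cont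
    · exact fun s hs => h1g_ne s hs
  -- pointwise bound for φ
  have hcothb : 0 < coth b := coth_pos hb
  have hφ_nonneg : ∀ s : ℝ, 1 ≤ s → 0 ≤ φ s := by
    intro s hs
    have h1 : 0 < coth (b * s) := coth_pos (mul_pos hb (lt_of_lt_of_le one_pos hs))
    have h2 : 0 < 1 - g s := lt_of_lt_of_le hε (hεle s hs)
    exact le_of_lt (mul_pos h1 (div_pos (hg_pos s hs) h2))
  set D : ℝ := coth b * (C / ε) with hDdef
  have hφ_le : ∀ s : ℝ, 1 ≤ s → φ s ≤ D * Real.exp (-(a / 2) * s) := by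
    intro s hs
    have h1 : coth (b * s) ≤ coth b := coth_le_coth hb (le_mul_of_one_le_right hb.le hs)
    have h1' : 0 < coth (b * s) := coth_pos (mul_pos hb (lt_of_lt_of_le one_pos hs))
    have h2 : 0 < 1 - g s := lt_of_lt_of_le hε (hεle s hs)
    have h3 : g s / (1 - g s) ≤ C * Real.exp (-(a / 2) * s) / ε := by
      apply div_le_div₀ (by positivity) (hg_le s hs) hε (hεle s hs)
    calc φ s ≤ coth b * (g s / (1 - g s)) := by
          apply mul_le_mul_of_nonneg_right h1 (div_nonneg (hg_pos s hs).le h2.le)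
      _ ≤ coth b * (C * Real.exp (-(a / 2) * s) / ε) := by
          apply mul_le_mul_of_nonneg_left h3 hcothb.le
      _ = D * Real.exp (-(a / 2) * s) := by rw [hDdef]; ring
  -- integrability of φ on Ioi 1
  have hφ_int : IntegrableOn φ (Set.Ioi (1:ℝ)) := by
    have hdom : IntegrableOn (fun s : ℝ => D * Real.exp (-(a / 2) * s)) (Set.Ioi (1:ℝ)) :=
      (exp_neg_integrableOn_Ioi 1 (half_pos ha)).const_mul D
    apply Integrable.mono' hdom
    · exact (hφ_cont.mono Set.Ioi_subset_Ici_self).aestronglyMeasurable measurableSet_Ioi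
    · filter_upwards [ae_restrict_mem measurableSet_Ioi] with s hs
      have hs1 : (1:ℝ) ≤ s := le_of_lt hs
      rw [Real.norm_eq_abs, abs_of_nonneg (hφ_nonneg s hs1)]
      exact hφ_le s hs1
  set I : ℝ := ∫ s in Set.Ioi (1:ℝ), φ s with hIdef
  have htend : Tendsto (fun R : ℝ => ∫ s in (1:ℝ)..R, φ s) atTop (nhds I) :=
    intervalIntegral_tendsto_integral_Ioi 1 hφ_int tendsto_id
  -- the limit
  have hsb : 0 < Real.sinh b := Real.sinh_pos_iff.2 hb
  refine ⟨Real.exp ((k : ℝ) * b * I) / Real.sinh b ^ k, by positivity, ?_⟩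
  have hmain : Tendsto (fun R : ℝ =>
      Real.exp ((k : ℝ) * b * ∫ s in (1:ℝ)..R, φ s) / Real.sinh b ^ k) atTop
      (nhds (Real.exp ((k : ℝ) * b * I) / Real.sinh b ^ k)) := by
    have h1 := htend.const_mul ((k : ℝ) * b)
    exact ((Real.continuous_exp.tendsto _).comp h1).div_const _
  refine hmain.congr' ?_
  filter_upwards [eventually_ge_atTop (1:ℝ)] with R hR
  -- for R ≥ 1 rewrite the ratio
  have hsub : Set.uIcc (1:ℝ) R ⊆ Set.Ici 1 := by
    rw [Set.uIcc_of_le hR]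
    exact fun y hy => (Set.mem_Icc.1 hy).1
  have hint_f : IntervalIntegrable
      (fun s : ℝ => coth (b * s) / (1 - σ * s / Real.sinh (a * s) ^ k)) volume 1 R :=
    (hf_cont.mono hsub).intervalIntegrable
  have hint_c : IntervalIntegrable (fun s : ℝ => coth (b * s)) volume 1 R :=
    (hcoth_cont.mono hsub).intervalIntegrable
  have hint_φ : IntervalIntegrable φ volume 1 R :=
    ((hφ_cont.mono hsub)).intervalIntegrable
  -- split the integral
  have hsplit : (∫ s in (1:ℝ)..R, coth (b * s) / (1 - σ * s / Real.sinh (a * s) ^ k))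
      = (∫ s in (1:ℝ)..R, coth (b * s)) + ∫ s in (1:ℝ)..R, φ s := by
    rw [← intervalIntegral.integral_add hint_c hint_φ]
    apply intervalIntegral.integral_congr
    intro s hs
    have hs1 : (1:ℝ) ≤ s := hsub hs
    simp only [hφdef, hgdef]
    exact aux_div (coth (b * s)) (σ * s / Real.sinh (a * s) ^ k) (h1g_ne s hs1)
  -- compute the coth integral via FTC
  have hftc : (∫ s in (1:ℝ)..R, b * coth (b * s))
      = Real.log (Real.sinh (b * R)) - Real.log (Real.sinh b) := by
    have hderiv : ∀ s ∈ Set.uIcc (1:ℝ) R,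
        HasDerivAt (fun u : ℝ => Real.log (Real.sinh (b * u))) (b * coth (b * s)) s := by
      intro s hs
      have hs1 : (1:ℝ) ≤ s := hsub hs
      have hsinhbs : 0 < Real.sinh (b * s) :=
        Real.sinh_pos_iff.2 (mul_pos hb (lt_of_lt_of_le one_pos hs1))
      have h1 : HasDerivAt (fun u : ℝ => b * u) b s := by
        simpa using (hasDerivAt_id s).const_mul b
      have h2 : HasDerivAt (fun u : ℝ => Real.sinh (b * u)) (Real.cosh (b * s) * b) s :=
        (Real.hasDerivAt_sinh (b * s)).comp s h1
      have h3 := h2.log hsinhbs.ne'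
      convert h3 using 1
      rw [coth]
      field_simp
    have hc : IntervalIntegrable (fun s : ℝ => b * coth (b * s)) volume 1 R :=
      (continuousOn_const.mul (hcoth_cont.mono hsub)).intervalIntegrable
    have := intervalIntegral.integral_eq_sub_of_hasDerivAt hderiv hc
    simpa using this
  have hcoth_val : (∫ s in (1:ℝ)..R, coth (b * s))
      = (Real.log (Real.sinh (b * R)) - Real.log (Real.sinh b)) / b := by
    rw [← hftc, intervalIntegral.integral_const_mul]
    field_simp
  -- algebra
  have hsinhbR : 0 < Real.sinh (b * R) :=
    Real.sinh_pos_iff.2 (mul_pos hb (lt_of_lt_of_le one_pos hR))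
  have hexp_eq : Real.exp ((k : ℝ) * b * ((Real.log (Real.sinh (b * R))
      - Real.log (Real.sinh b)) / b))
      = Real.sinh (b * R) ^ k / Real.sinh b ^ k := by
    have : (k : ℝ) * b * ((Real.log (Real.sinh (b * R)) - Real.log (Real.sinh b)) / b)
        = (k : ℝ) * Real.log (Real.sinh (b * R)) - (k : ℝ) * Real.log (Real.sinh b) := by
      field_simp
    rw [this, Real.exp_sub, Real.exp_nat_mul, Real.exp_nat_mul,
      Real.exp_log hsinhbR, Real.exp_log hsb]
  show Real.exp ((k : ℝ) * b * ∫ s in (1:ℝ)..R, φ s) / Real.sinh b ^ k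
      = Real.exp (((n : ℝ) - 1) * b * ∫ s in (1:ℝ)..R,
          coth (b * s) / (1 - σ * s / Real.sinh (a * s) ^ k)) / Real.sinh (b * R) ^ k
  rw [hkR, hsplit, hcoth_val]
  rw [mul_add ((k:ℝ) * b), Real.exp_add, hexp_eq]
  have h1 : Real.sinh (b * R) ^ k ≠ 0 := (pow_pos hsinhbR k).ne'
  have h2 : Real.sinh b ^ k ≠ 0 := (pow_pos hsb k).ne'
  field_simp
end
end

section
/- Let n ≥ 3 be an integer and define, for R > 0, Q(R) = (sinh R)^{n−1} · ∫₀^π (sin θ)^{n−2} · (cosh R − sinh R · cos θ)^{−2(n−1)} dθ. Then there exist real numbers α_{−(n−1)}, α_{−(n−2)}, …, α_{n−2}, α_{n−1} such that Q(R) = Σ_{j=−(n−1)}^{n−1} α_j · e^{2jR} for all R > 0. -/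
/-!
Substitute `θ ↦ φ` by relativistic aberration with rapidity `R`,
`cos φ = (cosh R cos θ - sinh R) / D` where `D = cosh R - sinh R cos θ`. Then `dφ = dθ / D`,
`sin φ = sin θ / D` and `cosh R + sinh R cos φ = 1 / D`, so the negative power `D^(-2(n-1))`
becomes the polynomial `(cosh R + sinh R cos φ)^(n-1)`. Hence `Q(R)` is a homogeneous polynomial
of degree `2(n-1)` in `cosh R` and `sinh R`, i.e. `e^(-2(n-1)R)` times a polynomial of degree
`2(n-1)` in `e^(2R)`.
-/

open MeasureTheory Real Filter

noncomputable section

/-- `Q R` is (up to a positive dimensional constant) the integral of the square of the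
hyperbolic Poisson kernel `P₋₁` over the geodesic sphere of radius `R` in `n`-dimensional
real hyperbolic space of curvature `-1`. -/
def Q (n : ℕ) (R : ℝ) : ℝ :=
  Real.sinh R ^ (n - 1) *
    ∫ θ in (0:ℝ)..π,
      Real.sin θ ^ (n - 2) * (Real.cosh R - Real.sinh R * Real.cos θ) ^ (-(2 * ((n : ℤ) - 1)))

open Set

theorem cosh_sub_sinh_mul_cos_pos (R θ : ℝ) : 0 < cosh R - sinh R * cos θ := by
  have h : |sinh R * cos θ| < cosh R := by
    rw [abs_mul]
    calc |sinh R| * |cos θ| ≤ |sinh R| := mul_le_of_le_one_right (abs_nonneg _) (abs_cos_le_one θ)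
      _ < cosh R := abs_lt_of_sq_lt_sq (by linarith [cosh_sq R]) (cosh_pos R).le
  linarith [le_abs_self (sinh R * cos θ)]

/-- The relativistic aberration formula with rapidity `R`: the cosine of the angle to which
the hyperbolic translation by `R` moves the boundary point at angle `θ`. -/
def aberrationCos (R θ : ℝ) : ℝ := (cosh R * cos θ - sinh R) / (cosh R - sinh R * cos θ)

section Aberration

variable (R : ℝ) {θ : ℝ}

theorem one_sub_aberrationCos_sq (θ : ℝ) :
    1 - aberrationCos R θ ^ 2 = (sin θ / (cosh R - sinh R * cos θ)) ^ 2 := by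
  have hD := (cosh_sub_sinh_mul_cos_pos R θ).ne'
  rw [aberrationCos, div_pow, div_pow, one_sub_div (pow_ne_zero 2 hD)]
  congr 1
  linear_combination (1 - cos θ ^ 2) * cosh_sq_sub_sinh_sq R - sin_sq_add_cos_sq θ

theorem abs_aberrationCos_le_one (θ : ℝ) : |aberrationCos R θ| ≤ 1 := by
  rw [← sq_le_one_iff_abs_le_one]
  linarith [one_sub_aberrationCos_sq R θ, sq_nonneg (sin θ / (cosh R - sinh R * cos θ))]

theorem aberrationCos_zero : aberrationCos R 0 = 1 := by
  have hD := cosh_sub_sinh_mul_cos_pos R 0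
  rw [cos_zero, mul_one] at hD
  rw [aberrationCos, cos_zero, mul_one, mul_one, div_self hD.ne']

theorem aberrationCos_pi : aberrationCos R π = -1 := by
  have hD := cosh_sub_sinh_mul_cos_pos R π
  rw [cos_pi] at hD
  rw [aberrationCos, cos_pi, div_eq_iff hD.ne']
  ring

theorem cosh_add_sinh_mul_aberrationCos (θ : ℝ) :
    cosh R + sinh R * aberrationCos R θ = (cosh R - sinh R * cos θ)⁻¹ := by
  have hD := (cosh_sub_sinh_mul_cos_pos R θ).ne'
  refine eq_inv_of_mul_eq_one_left ?_
  rw [aberrationCos]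
  field_simp
  linear_combination cosh_sq_sub_sinh_sq R

theorem sin_arccos_aberrationCos (hθ : θ ∈ Icc 0 π) :
    sin (arccos (aberrationCos R θ)) = sin θ / (cosh R - sinh R * cos θ) := by
  rw [sin_arccos, one_sub_aberrationCos_sq, sqrt_sq]
  exact div_nonneg (sin_nonneg_of_nonneg_of_le_pi hθ.1 hθ.2) (cosh_sub_sinh_mul_cos_pos R θ).le

theorem hasDerivAt_aberrationCos (θ : ℝ) :
    HasDerivAt (aberrationCos R) (-sin θ / (cosh R - sinh R * cos θ) ^ 2) θ := by
  have hD := (cosh_sub_sinh_mul_cos_pos R θ).ne'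
  have h := (((hasDerivAt_cos θ).const_mul (cosh R)).sub_const (sinh R)).div
    (((hasDerivAt_cos θ).const_mul (sinh R)).const_sub (cosh R)) hD
  refine h.congr_deriv ?_
  rw [div_left_inj' (pow_ne_zero 2 hD)]
  linear_combination -sin θ * cosh_sq_sub_sinh_sq R

theorem hasDerivAt_arccos_aberrationCos (hθ : θ ∈ Ioo 0 π) :
    HasDerivAt (fun θ ↦ arccos (aberrationCos R θ)) (cosh R - sinh R * cos θ)⁻¹ θ := by
  have hsin := sin_pos_of_pos_of_lt_pi hθ.1 hθ.2
  have hD := cosh_sub_sinh_mul_cos_pos R θ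
  have hsq : 0 < 1 - aberrationCos R θ ^ 2 := by
    rw [one_sub_aberrationCos_sq]; positivity
  have h := (hasDerivAt_arccos (x := aberrationCos R θ) (by rintro h; simp [h] at hsq)
    (by rintro h; simp [h] at hsq)).comp θ (hasDerivAt_aberrationCos R θ)
  refine h.congr_deriv ?_
  rw [← sin_arccos, sin_arccos_aberrationCos R (Ioo_subset_Icc_self hθ)]
  field_simp

theorem continuous_arccos_aberrationCos : Continuous fun θ ↦ arccos (aberrationCos R θ) :=
  continuous_arccos.comp <| (continuous_const.mul continuous_cos).sub continuous_const |>.div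
    (continuous_const.sub (continuous_const.mul continuous_cos))
    fun θ ↦ (cosh_sub_sinh_mul_cos_pos R θ).ne'

theorem integral_comp_arccos_aberrationCos {F : ℝ → ℝ} (hF : Continuous F) :
    ∫ θ in (0:ℝ)..π, (cosh R - sinh R * cos θ)⁻¹ * F (arccos (aberrationCos R θ)) =
      ∫ φ in (0:ℝ)..π, F φ := by
  have h := intervalIntegral.integral_deriv_smul_comp''
    (continuous_arccos_aberrationCos R).continuousOn
    (fun θ hθ ↦ (hasDerivAt_arccos_aberrationCos R
      (by rwa [min_eq_left pi_pos.le, max_eq_right pi_pos.le] at hθ)).hasDerivWithinAt)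
    ((continuous_const.sub (continuous_const.mul continuous_cos)).inv₀
      fun θ ↦ (cosh_sub_sinh_mul_cos_pos R θ).ne').continuousOn hF.continuousOn
  simpa [aberrationCos_zero, aberrationCos_pi] using h

theorem integral_sin_pow_mul_zpow_cosh_sub_sinh_mul_cos (a b : ℕ) :
    ∫ θ in (0:ℝ)..π, sin θ ^ a * (cosh R - sinh R * cos θ) ^ (-(a + b + 1 : ℤ)) =
      ∫ φ in (0:ℝ)..π, sin φ ^ a * (cosh R + sinh R * cos φ) ^ b := by
  rw [← integral_comp_arccos_aberrationCos R
    (F := fun φ ↦ sin φ ^ a * (cosh R + sinh R * cos φ) ^ b) (by fun_prop)]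
  refine intervalIntegral.integral_congr fun θ hθ ↦ ?_
  rw [uIcc_of_le pi_pos.le] at hθ
  obtain ⟨hge, hle⟩ := abs_le.1 (abs_aberrationCos_le_one R θ)
  simp only [sin_arccos_aberrationCos R hθ, cos_arccos hge hle, cosh_add_sinh_mul_aberrationCos]
  rw [zpow_neg, show (a + b + 1 : ℤ) = (a + b + 1 : ℕ) by push_cast; ring, zpow_natCast]
  simp only [div_eq_mul_inv, mul_pow, inv_pow, pow_add, pow_one, mul_inv]
  ring

end Aberration

open Polynomial

theorem integral_sin_pow_mul_add_mul_cos_pow (a b : ℕ) (c s : ℝ) :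
    ∫ φ in (0:ℝ)..π, sin φ ^ a * (c + s * cos φ) ^ b =
      ∑ k ∈ Finset.range (b + 1),
        b.choose k * c ^ k * s ^ (b - k) * ∫ φ in (0:ℝ)..π, sin φ ^ a * cos φ ^ (b - k) := by
  simp_rw [add_pow, Finset.mul_sum]
  rw [intervalIntegral.integral_finsetSum fun k _ ↦ by
    apply Continuous.intervalIntegrable; fun_prop]
  refine Finset.sum_congr rfl fun k _ ↦ ?_
  rw [← intervalIntegral.integral_const_mul]
  congr 1 with φ
  ring

theorem Polynomial.eval_exp_div_exp_pow_eq_sum_Icc {P : ℝ[X]} {N : ℕ} (hP : P.natDegree ≤ 2 * N)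
    (R : ℝ) :
    P.eval (exp (2 * R)) / exp (2 * R) ^ N =
      ∑ j ∈ Finset.Icc (-(N : ℤ)) N, P.coeff (j + N).toNat * exp (2 * j * R) := by
  rw [eval_eq_sum_range' (Nat.lt_succ_of_le hP), Finset.sum_div]
  refine Finset.sum_nbij' (fun i ↦ (i : ℤ) - N) (fun j ↦ (j + N).toNat) ?_ ?_ ?_ ?_ ?_
  iterate 4 intros; simp only [Finset.mem_range, Finset.mem_Icc] at *; omega
  intro i _
  rw [sub_add_cancel, Int.toNat_natCast, mul_div_assoc, ← exp_nat_mul, ← exp_nat_mul, ← exp_sub]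
  push_cast
  ring_nf

theorem cosh_pow_mul_sinh_pow_eq_eval {k l N : ℕ} (h : k + l = 2 * N) (R : ℝ) :
    cosh R ^ k * sinh R ^ l =
      (C ((4 : ℝ) ^ N)⁻¹ * (X + 1) ^ k * (X - 1) ^ l).eval (exp (2 * R)) / exp (2 * R) ^ N := by
  have hcosh : cosh R = (exp (2 * R) + 1) / (2 * exp R) := by
    rw [cosh_eq, exp_neg, two_mul, exp_add]; field_simp
  have hsinh : sinh R = (exp (2 * R) - 1) / (2 * exp R) := by
    rw [sinh_eq, exp_neg, two_mul, exp_add]; field_simp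
  have hexp : (2 * exp R) ^ (k + l) = 4 ^ N * exp (2 * R) ^ N := by
    have hsq : (2 * exp R) ^ 2 = 4 * exp (2 * R) := by rw [two_mul R, exp_add]; ring
    rw [h, pow_mul, hsq, mul_pow]
  simp only [eval_mul, eval_C, eval_pow, eval_add, eval_sub, eval_X, eval_one]
  rw [hcosh, hsinh, div_pow, div_pow, div_mul_div_comm, ← pow_add, hexp]
  field_simp

theorem exists_sum_exp_eq_sum_cosh_pow_mul_sinh_pow (N : ℕ) {s : Finset ℕ}
    (hs : ∀ k ∈ s, k ≤ 2 * N) (β : ℕ → ℝ) :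
    ∃ α : ℤ → ℝ, ∀ R, ∑ k ∈ s, β k * (cosh R ^ k * sinh R ^ (2 * N - k)) =
      ∑ j ∈ Finset.Icc (-(N : ℤ)) N, α j * exp (2 * j * R) := by
  set P : ℝ[X] := ∑ k ∈ s, C (β k) * (C ((4 : ℝ) ^ N)⁻¹ * (X + 1) ^ k * (X - 1) ^ (2 * N - k))
  have hP : P.natDegree ≤ 2 * N := by
    refine natDegree_sum_le_of_forall_le _ _ fun k hk ↦ ?_
    have := hs k hk
    compute_degree
    omega
  refine ⟨fun j ↦ P.coeff (j + N).toNat, fun R ↦ ?_⟩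
  rw [← P.eval_exp_div_exp_pow_eq_sum_Icc hP, eval_finsetSum, Finset.sum_div]
  refine Finset.sum_congr rfl fun k hk ↦ ?_
  rw [cosh_pow_mul_sinh_pow_eq_eval (N := N) (by have := hs k hk; omega), eval_C_mul,
    mul_div_assoc]

theorem Q_add_two_eq_sum (m : ℕ) (R : ℝ) :
    Q (m + 2) R = ∑ k ∈ Finset.range (m + 2),
      ((m + 1).choose k * ∫ φ in (0:ℝ)..π, sin φ ^ m * cos φ ^ (m + 1 - k)) *
        (cosh R ^ k * sinh R ^ (2 * (m + 1) - k)) := by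
  have hexp : -(2 * (((m + 2 : ℕ) : ℤ) - 1)) = -((m : ℕ) + (m + 1 : ℕ) + 1 : ℤ) := by
    push_cast; ring
  rw [Q, Nat.add_sub_cancel, show m + 2 - 1 = m + 1 from rfl, hexp,
    integral_sin_pow_mul_zpow_cosh_sub_sinh_mul_cos, integral_sin_pow_mul_add_mul_cos_pow,
    Finset.mul_sum]
  refine Finset.sum_congr rfl fun k hk ↦ ?_
  have hk : k ≤ m + 1 := Nat.lt_succ_iff.1 (Finset.mem_range.1 hk)
  rw [show 2 * (m + 1) - k = (m + 1) + (m + 1 - k) by omega, pow_add]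
  ring

/-- For `n ≥ 3`, the spherical L²-integral of the hyperbolic Poisson kernel has the closed
form `Q(R) = Σ_{j=-(n-1)}^{n-1} α_j e^(2jR)` for some real coefficients `α_j`. -/
theorem poisson_kernel_sphere_integral_closed_form (n : ℕ) (hn : 3 ≤ n) :
    ∃ α : ℤ → ℝ, ∀ R : ℝ, 0 < R →
      Q n R = ∑ j ∈ Finset.Icc (-((n : ℤ) - 1)) ((n : ℤ) - 1), α j * Real.exp (2 * j * R) := by
  obtain ⟨m, rfl⟩ : ∃ m, n = m + 2 := ⟨n - 2, by omega⟩
  obtain ⟨α, hα⟩ := exists_sum_exp_eq_sum_cosh_pow_mul_sinh_pow (m + 1)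
    (s := Finset.range (m + 2)) (fun k hk ↦ by simp only [Finset.mem_range] at hk; omega)
    fun k ↦ (m + 1).choose k * ∫ φ in (0:ℝ)..π, sin φ ^ m * cos φ ^ (m + 1 - k)
  refine ⟨α, fun R _ ↦ ?_⟩
  rw [Q_add_two_eq_sum, hα, show ((m + 2 : ℕ) : ℤ) - 1 = (m + 1 : ℕ) by push_cast; ring]
end
end

section
/- Let n ≥ 3 be an integer and define, for R > 0, Q(R) = (sinh R)^{n−1} · ∫₀^π (sin θ)^{n−2} · (cosh R − sinh R · cos θ)^{−2(n−1)} dθ. Then the limit lim_{R→∞} Q(R) · e^{−2(n−1)R} exists and is a strictly positive real number; in particular Q(R) grows like e^{2(n−1)R} as R → ∞. -/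
open MeasureTheory Real Filter
open Topology

noncomputable section

/- ### Auxiliary definitions -/

/-- The rescaled integrand: after the substitution `θ = e^{-R} u`. -/
def Fn (n : ℕ) (R : ℝ) (u : ℝ) : ℝ :=
  (Set.Ioc (0:ℝ) (π * Real.exp R)).indicator (fun u =>
    (Real.sinh R * Real.exp (-R)) ^ (n-1) * (Real.exp R * Real.sin (Real.exp (-R) * u)) ^ (n-2) *
      (Real.exp R * (Real.cosh R - Real.sinh R * Real.cos (Real.exp (-R) * u)))
        ^ (-((2*(n-1) : ℕ) : ℤ))) u

/-- The pointwise limit. -/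
def fl (n : ℕ) (u : ℝ) : ℝ :=
  (1/2 : ℝ) ^ (n-1) * u ^ (n-2) * (1 + u^2/4) ^ (-((2*(n-1) : ℕ) : ℤ))

/- ### Elementary lemmas -/

lemma one_sub_cos (x : ℝ) : 1 - Real.cos x = 2 * Real.sin (x/2) ^ 2 := by
  have h1 := Real.cos_two_mul (x/2)
  have h2 := Real.sin_sq_add_cos_sq (x/2)
  rw [show 2*(x/2) = x by ring] at h1
  nlinarith

lemma sinh_mul_exp_neg (R : ℝ) :
    Real.sinh R * Real.exp (-R) = (1 - Real.exp (-R) ^ 2) / 2 := by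
  have h1 : Real.exp R * Real.exp (-R) = 1 := by
    rw [← Real.exp_add]; simp
  rw [Real.sinh_eq]
  linear_combination h1 / 2

lemma tendsto_sin_div : Tendsto (fun x : ℝ => Real.sin x / x) (𝓝[≠] (0:ℝ)) (𝓝 1) := by
  have h := Real.hasDerivAt_sin 0
  rw [Real.cos_zero] at h
  have h2 := hasDerivAt_iff_tendsto_slope.mp h
  refine h2.congr fun x => ?_
  simp [slope_fun_def, div_eq_inv_mul]

lemma aux_theta (u : ℝ) (hu : 0 < u) :
    Tendsto (fun R : ℝ => Real.exp (-R) * u) atTop (𝓝[≠] (0:ℝ)) := by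
  apply tendsto_nhdsWithin_of_tendsto_nhds_of_eventually_within
  · simpa using Real.tendsto_exp_neg_atTop_nhds_zero.mul_const u
  · filter_upwards with R
    exact (mul_pos (Real.exp_pos _) hu).ne'

lemma tendsto_B (u : ℝ) (hu : 0 < u) :
    Tendsto (fun R : ℝ => Real.exp R * Real.sin (Real.exp (-R) * u)) atTop (𝓝 u) := by
  have h := (tendsto_sin_div.comp (aux_theta u hu)).const_mul u
  rw [mul_one] at h
  refine h.congr fun R => ?_
  have h1 : Real.exp (-R) ≠ 0 := (Real.exp_pos _).ne'
  simp only [Function.comp]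
  rw [Real.exp_neg]
  field_simp

lemma tendsto_A : Tendsto (fun R : ℝ => Real.sinh R * Real.exp (-R)) atTop (𝓝 (1/2)) := by
  have h := (tendsto_const_nhds (x := (1:ℝ)).sub
      (Real.tendsto_exp_neg_atTop_nhds_zero.pow 2)).div_const 2
  simp only [ne_eq, OfNat.ofNat_ne_zero, not_false_eq_true, zero_pow, sub_zero] at h
  exact h.congr fun R => (sinh_mul_exp_neg R).symm

lemma tendsto_C (u : ℝ) (hu : 0 < u) :
    Tendsto (fun R : ℝ => Real.exp R * (Real.cosh R - Real.sinh R * Real.cos (Real.exp (-R) * u)))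
      atTop (𝓝 (1 + u^2/4)) := by
  have key : ∀ R : ℝ, Real.exp R * (Real.cosh R - Real.sinh R * Real.cos (Real.exp (-R) * u))
      = Real.exp R * Real.exp (-R) +
        2 * ((Real.sinh R * Real.exp (-R)) * (Real.exp R * Real.sin (Real.exp (-R) * (u/2)))^2) := by
    intro R
    have h1 := Real.cosh_sub_sinh R
    have h2 := one_sub_cos (Real.exp (-R) * u)
    have h3 : Real.exp R * Real.exp (-R) = 1 := by rw [← Real.exp_add]; simp
    have h4 : Real.exp (-R) * (u/2) = (Real.exp (-R) * u)/2 := by ring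
    rw [h4]
    linear_combination Real.exp R * h1 + (Real.exp R * Real.sinh R) * h2 +
      (-(2 * Real.exp R * Real.sinh R * Real.sin (Real.exp (-R)*u/2)^2)) * h3
  have hlim : Tendsto (fun R : ℝ => Real.exp R * Real.exp (-R) +
      2 * ((Real.sinh R * Real.exp (-R)) * (Real.exp R * Real.sin (Real.exp (-R) * (u/2)))^2))
      atTop (𝓝 (1 + u^2/4)) := by
    have h0 : ∀ R : ℝ, Real.exp R * Real.exp (-R) = 1 := fun R => by rw [← Real.exp_add]; simp
    have h := (tendsto_const_nhds (x := (1:ℝ))).add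
      ((tendsto_A.mul ((tendsto_B (u/2) (by positivity)).pow 2)).const_mul 2)
    have : (1 : ℝ) + 2 * (1/2 * (u/2)^2) = 1 + u^2/4 := by ring
    rw [this] at h
    exact h.congr fun R => by rw [h0 R]
  exact hlim.congr fun R => (key R).symm

/- ### Generic product bound -/

lemma prod_bound (n : ℕ) (hn : 3 ≤ n) {A B C c u : ℝ} (hA0 : 0 ≤ A) (hA : A ≤ 1)
    (hB0 : 0 ≤ B) (hB : B ≤ u) (hu : 0 ≤ u) (hc : 0 < c) (hC : (1 + u^2)/c ≤ C) :
    A ^ (n-1) * B ^ (n-2) * C ^ (-((2*(n-1) : ℕ) : ℤ)) ≤ c ^ (2*(n-1)) * (1 + u^2)⁻¹ := by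
  set m := 2*(n-1) with hm
  set v := 1 + u^2 with hv
  have hv1 : 1 ≤ v := by nlinarith [sq_nonneg u]
  have hv0 : 0 < v := by linarith
  have hCpos : 0 < C := lt_of_lt_of_le (by positivity) hC
  rw [zpow_neg, zpow_natCast]
  have h1 : A ^ (n-1) ≤ 1 := pow_le_one₀ hA0 hA
  have h2 : B ^ (n-2) ≤ v ^ (n-2) := pow_le_pow_left₀ hB0 (hB.trans (by nlinarith)) _
  have h3 : (C ^ m)⁻¹ ≤ c ^ m / v ^ m := by
    have h4 : (v/c) ^ m ≤ C ^ m := pow_le_pow_left₀ (by positivity) hC m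
    rw [div_pow] at h4
    have h5 : (C ^ m)⁻¹ ≤ (v ^ m / c ^ m)⁻¹ := by
      apply inv_anti₀ (by positivity) h4
    rwa [inv_div] at h5
  have h6 : A ^ (n-1) * B ^ (n-2) * (C ^ m)⁻¹ ≤ 1 * v ^ (n-2) * (c ^ m / v ^ m) := by
    apply mul_le_mul (mul_le_mul h1 h2 (by positivity) (by norm_num)) h3 (by positivity)
    positivity
  refine h6.trans ?_
  rw [one_mul]
  have h7 : v ^ (n-2) * (c ^ m / v ^ m) = c ^ m * (v ^ (n-2) / v ^ m) := by ring
  rw [h7]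
  apply mul_le_mul_of_nonneg_left _ (by positivity)
  rw [div_le_iff₀ (by positivity)]
  have h8 : v⁻¹ * v ^ m = v ^ (m - 1) := by
    rw [pow_sub₀ v hv0.ne' (by omega)]
    ring
  rw [h8]
  exact pow_le_pow_right₀ hv1 (by omega)

/- ### Pointwise convergence -/

lemma tendsto_Fn (n : ℕ) (u : ℝ) (hu : 0 < u) :
    Tendsto (fun R => Fn n R u) atTop (𝓝 (fl n u)) := by
  have h3 : Tendsto (fun R : ℝ =>
      (Real.exp R * (Real.cosh R - Real.sinh R * Real.cos (Real.exp (-R) * u)))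
        ^ (-((2*(n-1) : ℕ) : ℤ))) atTop (𝓝 ((1 + u^2/4) ^ (-((2*(n-1) : ℕ) : ℤ)))) :=
    ((continuousAt_zpow₀ (1 + u^2/4) (-((2*(n-1) : ℕ) : ℤ))
      (Or.inl (by positivity))).tendsto).comp (tendsto_C u hu)
  have hmain := ((tendsto_A.pow (n-1)).mul ((tendsto_B u hu).pow (n-2))).mul h3
  refine hmain.congr' ?_
  have hev : ∀ᶠ R : ℝ in atTop, u ≤ π * Real.exp R := by
    filter_upwards [Real.tendsto_exp_atTop.eventually_ge_atTop u] with R hR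
    nlinarith [Real.pi_gt_three, Real.exp_pos R]
  filter_upwards [hev] with R hR
  rw [Fn, Set.indicator_of_mem (Set.mem_Ioc.mpr ⟨hu, hR⟩)]

/- ### Bound for Fn -/

lemma Fn_bound (n : ℕ) (hn : 3 ≤ n) (R : ℝ) (hR : 1 ≤ R) (u : ℝ) :
    |Fn n R u| ≤ (2*π^2) ^ (2*(n-1)) * (1 + u^2)⁻¹ := by
  rcases Classical.em (u ∈ Set.Ioc (0:ℝ) (π * Real.exp R)) with hmem | hmem
  swap
  · rw [Fn, Set.indicator_of_notMem hmem, abs_zero]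
    positivity
  obtain ⟨hu0, huπ⟩ := Set.mem_Ioc.mp hmem
  rw [Fn, Set.indicator_of_mem hmem]
  set θ := Real.exp (-R) * u with hθ
  have hθ0 : 0 < θ := mul_pos (Real.exp_pos _) hu0
  have hee : Real.exp R * Real.exp (-R) = 1 := by rw [← Real.exp_add]; simp
  have heu : Real.exp R * θ = u := by rw [hθ]; linear_combination u * hee
  have hθπ : θ ≤ π := by
    calc θ ≤ Real.exp (-R) * (π * Real.exp R) :=
          mul_le_mul_of_nonneg_left huπ (Real.exp_pos _).le
      _ = π := by linear_combination π * hee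
  have hπ0 : (0:ℝ) < π := Real.pi_pos
  -- A bounds
  have hA0 : 0 ≤ Real.sinh R * Real.exp (-R) :=
    mul_nonneg (Real.sinh_nonneg_iff.mpr (by linarith)) (Real.exp_pos _).le
  have hA1 : Real.sinh R * Real.exp (-R) ≤ 1 := by
    rw [sinh_mul_exp_neg]; nlinarith [sq_nonneg (Real.exp (-R))]
  -- B bounds
  have hB0 : 0 ≤ Real.exp R * Real.sin θ :=
    mul_nonneg (Real.exp_pos _).le (Real.sin_nonneg_of_nonneg_of_le_pi hθ0.le hθπ)
  have hBu : Real.exp R * Real.sin θ ≤ u := by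
    calc Real.exp R * Real.sin θ ≤ Real.exp R * θ :=
          mul_le_mul_of_nonneg_left (Real.sin_le hθ0.le) (Real.exp_pos _).le
      _ = u := heu
  -- C bound
  have hsinh : Real.exp R / 4 ≤ Real.sinh R := by
    rw [Real.sinh_eq]
    have h1 : Real.exp (-R) ≤ 1 := Real.exp_le_one_iff.mpr (by linarith)
    have h2 : (2:ℝ) ≤ Real.exp R := by
      have h3 := Real.add_one_le_exp 1
      have h4 := Real.exp_le_exp.mpr hR
      linarith
    linarith
  have hs2 : θ/π ≤ Real.sin (θ/2) := by
    calc θ/π = 2/π * (θ/2) := by field_simp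
      _ ≤ Real.sin (θ/2) := Real.mul_le_sin (by linarith) (by linarith)
  have hs3 : θ^2 ≤ Real.sin (θ/2)^2 * π^2 := by
    have h := pow_le_pow_left₀ (by positivity) hs2 2
    rw [div_pow] at h
    rw [div_le_iff₀ (by positivity)] at h
    linarith
  have hP : Real.cosh R - Real.sinh R * Real.cos θ
      = Real.exp (-R) + Real.sinh R * (2 * Real.sin (θ/2)^2) := by
    linear_combination Real.cosh_sub_sinh R + Real.sinh R * one_sub_cos θ
  have hC : (1 + u^2)/(2*π^2) ≤ Real.exp R * (Real.cosh R - Real.sinh R * Real.cos θ) := by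
    rw [hP, div_le_iff₀ (by positivity : (0:ℝ) < 2*π^2)]
    have k1 : u^2 = (Real.exp R)^2 * θ^2 := by rw [← heu]; ring
    have k2 : (Real.exp R)^2*θ^2 ≤ (Real.exp R)^2 * (Real.sin (θ/2)^2 * π^2) :=
      mul_le_mul_of_nonneg_left hs3 (by positivity)
    nlinarith [hee, Real.exp_pos R, Real.pi_gt_three, sq_nonneg (Real.sin (θ/2)),
      mul_le_mul_of_nonneg_left hsinh
        (by positivity : (0:ℝ) ≤ 4 * (Real.exp R * (Real.sin (θ/2)^2 * π^2)))]
  have hCpos : 0 < Real.exp R * (Real.cosh R - Real.sinh R * Real.cos θ) :=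
    lt_of_lt_of_le (by positivity) hC
  have hnn : 0 ≤ (Real.sinh R * Real.exp (-R)) ^ (n-1) * (Real.exp R * Real.sin θ) ^ (n-2) *
      (Real.exp R * (Real.cosh R - Real.sinh R * Real.cos θ)) ^ (-((2*(n-1):ℕ):ℤ)) :=
    mul_nonneg (mul_nonneg (pow_nonneg hA0 _) (pow_nonneg hB0 _)) (zpow_nonneg hCpos.le _)
  rw [abs_of_nonneg hnn]
  exact prod_bound n hn hA0 hA1 hB0 hBu hu0.le (by positivity) hC

/- ### fl facts -/

lemma fl_pos (n : ℕ) (u : ℝ) (hu : 0 < u) : 0 < fl n u := by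
  rw [fl]
  have h : (0:ℝ) < 1 + u^2/4 := by positivity
  positivity

lemma fl_integrable (n : ℕ) (hn : 3 ≤ n) : IntegrableOn (fl n) (Set.Ioi 0) := by
  apply Integrable.mono' ((integrable_inv_one_add_sq.const_mul ((4:ℝ)^(2*(n-1)))).restrict)
  · have hc : Continuous (fl n) := by
      refine (continuous_const.mul (continuous_pow _)).mul ?_
      refine Continuous.zpow₀ ?_ _ fun u => Or.inl (by positivity)
      exact continuous_const.add ((continuous_pow 2).div_const 4)
    exact hc.aestronglyMeasurable.restrict
  · rw [ae_restrict_iff' measurableSet_Ioi]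
    refine ae_of_all _ fun u hu => ?_
    rw [Real.norm_eq_abs, abs_of_nonneg (fl_pos n u hu).le, fl]
    exact prod_bound n hn (by norm_num) (by norm_num) (le_of_lt hu) le_rfl (le_of_lt hu)
      (by norm_num) (by nlinarith [sq_nonneg u])

/- ### The algebraic identity -/

lemma hexp_lemma (n : ℕ) (hn : 3 ≤ n) (R : ℝ) :
    Real.exp (-2*((n:ℝ)-1)*R) * Real.exp (-R)
      = (Real.exp (-R))^(n-1) * (Real.exp R)^(n-2) * ((Real.exp R)^(2*(n-1)))⁻¹ := by
  rw [← Real.exp_nat_mul, ← Real.exp_nat_mul, ← Real.exp_nat_mul, ← Real.exp_neg,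
    ← Real.exp_add, ← Real.exp_add, ← Real.exp_add]
  congr 1
  push_cast [Nat.cast_sub (show 1 ≤ n by omega), Nat.cast_sub (show 2 ≤ n by omega)]
  ring

lemma ptwise (n : ℕ) (hn : 3 ≤ n) (R u : ℝ) :
    Real.sinh R ^ (n-1) * Real.exp (-2*((n:ℝ)-1)*R) * Real.exp (-R) *
      (Real.sin (Real.exp (-R)*u) ^ (n-2) *
        (Real.cosh R - Real.sinh R * Real.cos (Real.exp (-R)*u)) ^ (-((2*(n-1):ℕ):ℤ)))
    = (Real.sinh R * Real.exp (-R))^(n-1) * (Real.exp R * Real.sin (Real.exp (-R)*u))^(n-2) *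
      (Real.exp R * (Real.cosh R - Real.sinh R * Real.cos (Real.exp (-R)*u)))
        ^ (-((2*(n-1):ℕ):ℤ)) := by
  have hexp := hexp_lemma n hn R
  simp only [mul_pow, mul_zpow, zpow_neg, zpow_natCast]
  linear_combination (Real.sinh R^(n-1) * Real.sin (Real.exp (-R)*u)^(n-2) *
    ((Real.cosh R - Real.sinh R * Real.cos (Real.exp (-R)*u))^(2*(n-1)))⁻¹) * hexp

/- ### Change of variables -/

lemma Q_eq (n : ℕ) (hn : 3 ≤ n) (R : ℝ) (hR : 0 < R) :
    Q n R * Real.exp (-2 * ((n:ℝ)-1) * R) = ∫ u in Set.Ioi (0:ℝ), Fn n R u := by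
  have hm : ∀ x : ℝ, x ^ (-(2 * ((n:ℤ) - 1))) = x ^ (-((2*(n-1):ℕ):ℤ)) := by
    intro x; congr 1
    push_cast [Nat.cast_sub (show 1 ≤ n by omega)]
    ring
  have hb : (0:ℝ) ≤ π * Real.exp R := by positivity
  have e1 : ∫ u in Set.Ioi (0:ℝ), Fn n R u
      = ∫ u in Set.Ioc (0:ℝ) (π * Real.exp R), (fun u =>
          (Real.sinh R * Real.exp (-R)) ^ (n-1) *
            (Real.exp R * Real.sin (Real.exp (-R) * u)) ^ (n-2) *
            (Real.exp R * (Real.cosh R - Real.sinh R * Real.cos (Real.exp (-R) * u)))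
              ^ (-((2*(n-1) : ℕ) : ℤ))) u := by
    simp only [Fn]
    rw [setIntegral_indicator measurableSet_Ioc,
      Set.inter_eq_right.mpr Set.Ioc_subset_Ioi_self]
  have e2 : ∫ u in Set.Ioc (0:ℝ) (π * Real.exp R), (fun u =>
          (Real.sinh R * Real.exp (-R)) ^ (n-1) *
            (Real.exp R * Real.sin (Real.exp (-R) * u)) ^ (n-2) *
            (Real.exp R * (Real.cosh R - Real.sinh R * Real.cos (Real.exp (-R) * u)))
              ^ (-((2*(n-1) : ℕ) : ℤ))) u
      = ∫ u in (0:ℝ)..(π * Real.exp R),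
          (Real.sinh R * Real.exp (-R)) ^ (n-1) *
            (Real.exp R * Real.sin (Real.exp (-R) * u)) ^ (n-2) *
            (Real.exp R * (Real.cosh R - Real.sinh R * Real.cos (Real.exp (-R) * u)))
              ^ (-((2*(n-1) : ℕ) : ℤ)) := (intervalIntegral.integral_of_le hb).symm
  have e3 : (∫ θ in (0:ℝ)..π, Real.sin θ ^ (n-2) *
        (Real.cosh R - Real.sinh R * Real.cos θ) ^ (-((2*(n-1):ℕ):ℤ)))
      = Real.exp (-R) * ∫ u in (0:ℝ)..(π * Real.exp R),
          Real.sin (Real.exp (-R) * u) ^ (n-2) *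
            (Real.cosh R - Real.sinh R * Real.cos (Real.exp (-R) * u))
              ^ (-((2*(n-1):ℕ):ℤ)) := by
    have h := intervalIntegral.smul_integral_comp_mul_left (a := 0) (b := π * Real.exp R)
      (fun θ => Real.sin θ ^ (n-2) *
        (Real.cosh R - Real.sinh R * Real.cos θ) ^ (-((2*(n-1):ℕ):ℤ))) (Real.exp (-R))
    have hpi : Real.exp (-R) * (π * Real.exp R) = π := by
      rw [Real.exp_neg]; field_simp
    rw [mul_zero, hpi, smul_eq_mul] at h
    exact h.symm
  have e4 : (∫ u in (0:ℝ)..(π * Real.exp R),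
          Real.sin (Real.exp (-R) * u) ^ (n-2) *
            (Real.cosh R - Real.sinh R * Real.cos (Real.exp (-R) * u))
              ^ (-((2*(n-1):ℕ):ℤ))) * (Real.sinh R ^ (n-1) * Real.exp (-2*((n:ℝ)-1)*R) *
                Real.exp (-R))
      = ∫ u in (0:ℝ)..(π * Real.exp R),
          (Real.sinh R * Real.exp (-R)) ^ (n-1) *
            (Real.exp R * Real.sin (Real.exp (-R) * u)) ^ (n-2) *
            (Real.exp R * (Real.cosh R - Real.sinh R * Real.cos (Real.exp (-R) * u)))
              ^ (-((2*(n-1) : ℕ) : ℤ)) := by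
    rw [mul_comm, ← intervalIntegral.integral_const_mul]
    apply intervalIntegral.integral_congr
    intro u _
    linear_combination ptwise n hn R u
  rw [Q]
  simp only [hm]
  rw [e3, e1, e2, ← e4]
  ring

/- ### Main theorem -/

/-- For `n ≥ 3`, `Q(R)` grows like `e^(2(n-1)R)`: the limit of `Q(R)·e^(-2(n-1)R)` as
`R → ∞` exists and is a strictly positive real number. -/
theorem poisson_kernel_sphere_integral_growth (n : ℕ) (hn : 3 ≤ n) :
    ∃ L : ℝ, 0 < L ∧
      Tendsto (fun R : ℝ => Q n R * Real.exp (-2 * ((n : ℝ) - 1) * R)) atTop (nhds L) := by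
  refine ⟨∫ u in Set.Ioi (0:ℝ), fl n u, ?_, ?_⟩
  · rw [setIntegral_pos_iff_support_of_nonneg_ae ?_ (fl_integrable n hn)]
    · refine lt_of_lt_of_le ?_ (measure_mono
        (fun u hu => ⟨(fl_pos n u hu).ne', hu⟩ :
          Set.Ioi (0:ℝ) ⊆ Function.support (fl n) ∩ Set.Ioi 0))
      rw [Real.volume_Ioi]
      exact ENNReal.zero_lt_top
    · rw [Filter.EventuallyLE, ae_restrict_iff' measurableSet_Ioi]
      exact ae_of_all _ fun u hu => (fl_pos n u hu).le
  · have hDCT := tendsto_integral_filter_of_dominated_convergence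
      (μ := volume.restrict (Set.Ioi (0:ℝ))) (F := fun R u => Fn n R u) (f := fl n)
      (l := atTop) (bound := fun u => (2*π^2)^(2*(n-1)) * (1+u^2)⁻¹)
      ?_ ?_ ?_ ?_
    · refine hDCT.congr' ?_
      filter_upwards [eventually_ge_atTop (1:ℝ)] with R hR
      exact (Q_eq n hn R (by linarith)).symm
    · filter_upwards [eventually_ge_atTop (1:ℝ)] with R hR
      have hcont : Continuous (fun u : ℝ =>
          (Real.sinh R * Real.exp (-R)) ^ (n-1) *
            (Real.exp R * Real.sin (Real.exp (-R) * u)) ^ (n-2) *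
            (Real.exp R * (Real.cosh R - Real.sinh R * Real.cos (Real.exp (-R) * u)))
              ^ (-((2*(n-1) : ℕ) : ℤ))) := by
        have hP : ∀ u : ℝ, Real.exp R *
            (Real.cosh R - Real.sinh R * Real.cos (Real.exp (-R) * u)) ≠ 0 := by
          intro u
          have h1 : Real.sinh R * Real.cos (Real.exp (-R) * u) ≤ Real.sinh R := by
            nlinarith [Real.cos_le_one (Real.exp (-R) * u),
              Real.sinh_nonneg_iff.mpr (show (0:ℝ) ≤ R by linarith)]
          have h2 : Real.exp (-R) ≤ Real.cosh R - Real.sinh R * Real.cos (Real.exp (-R) * u) := by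
            have := Real.cosh_sub_sinh R
            linarith
          exact (mul_pos (Real.exp_pos R)
            (lt_of_lt_of_le (Real.exp_pos (-R)) h2)).ne'
        refine (continuous_const.mul ((continuous_const.mul (Real.continuous_sin.comp
          (continuous_const.mul continuous_id))).pow (n-2))).mul ?_
        refine Continuous.zpow₀ ?_ _ fun u => Or.inl (hP u)
        exact continuous_const.mul (continuous_const.sub (continuous_const.mul
          (Real.continuous_cos.comp (continuous_const.mul continuous_id))))
      exact ((hcont.aestronglyMeasurable).indicator measurableSet_Ioc).restrict
    · filter_upwards [eventually_ge_atTop (1:ℝ)] with R hR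
      refine ae_of_all _ fun u => ?_
      rw [Real.norm_eq_abs]
      exact Fn_bound n hn R hR u
    · exact (integrable_inv_one_add_sq.const_mul _).restrict
    · rw [ae_restrict_iff' measurableSet_Ioi]
      exact ae_of_all _ fun u hu => tendsto_Fn n u hu

end
end
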